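/- Let A be an automorphism of the d-regular rooted tree acting transitively on levels and B a tree endomorphism. Define Log_{A,n}(B)(w) = d_{A,n}(w, B(w)) ∈ ℤ/d^nℤ, identified with a word of length n via d-ary expansion. Then the map L : X* → X* given on level n by Log_{A,n}(B) is an endomorphism of the tree (level-preserving and prefix-compatible). -/

import Mathlib

/-!
On a word `w` of length `n`, level-transitivity makes the orbit of `w` under `A` the whole
`n`-th level, which has `d ^ n` elements; so `w` is periodic of minimal period exactly `d ^ n`,
and `L w` is the unique exponent `k < d ^ n` with `A^k(w) = B(w)`. Writing
`L (w ++ [a]) = u ++ [b]`, the number `K` it encodes is `≡ wordToNat u (mod d ^ n)`, and since the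
`A^K` and `B` are tree endomorphisms, `A^K(w ++ [a]) = B(w ++ [a])` restricts to
`A^K(w) = B(w)`. Hence `wordToNat u` is that same exponent, and `u = L w`.
-/

/-- A (level-preserving, adjacency-preserving) endomorphism of the rooted tree `X*`. -/
def IsEndo {X : Type*} (f : List X → List X) : Prop :=
  (∀ w, (f w).length = w.length) ∧ ∀ w a, ∃ b, f (w ++ [a]) = f w ++ [b]

/-- The natural number `∑ w_i d^i` encoded by a word over `{0,…,d-1}`
(`d`-ary expansion, least significant digit first). -/
def wordToNat {d : ℕ} (w : List (Fin d)) : ℕ :=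
  w.foldr (fun a acc => a.val + d * acc) 0

open Function

lemma length_iterate_of_length_apply {X : Type*} {f : List X → List X}
    (hf : ∀ w, (f w).length = w.length) (k : ℕ) (w : List X) : (f^[k] w).length = w.length := by
  induction k with
  | zero => rfl
  | succ k ih => rw [iterate_succ_apply', hf, ih]

namespace IsEndo

variable {X : Type*} {f : List X → List X}

lemma iterate (hf : IsEndo f) (k : ℕ) : IsEndo f^[k] := by
  refine ⟨length_iterate_of_length_apply hf.1 k, fun w a => ?_⟩
  induction k with
  | zero => exact ⟨a, rfl⟩
  | succ k ih =>
    obtain ⟨b, hb⟩ := ih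
    obtain ⟨c, hc⟩ := hf.2 (f^[k] w) b
    exact ⟨c, by rw [iterate_succ_apply', hb, hc, iterate_succ_apply']⟩

lemma eq_of_apply_append_eq (hf : IsEndo f) {w v : List X} {a c : X}
    (h : f (w ++ [a]) = v ++ [c]) : f w = v := by
  obtain ⟨b, hb⟩ := hf.2 w a
  exact (List.append_inj' (hb ▸ h : f w ++ [b] = v ++ [c]) rfl).1

end IsEndo

lemma minimalPeriod_eq_card_pow_length {X : Type*} [Fintype X] {f : List X → List X}
    (hlen : ∀ w, (f w).length = w.length)
    (htrans : ∀ u v : List X, u.length = v.length → ∃ k, f^[k] u = v) (w : List X) :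
    minimalPeriod f w = Fintype.card X ^ w.length := by
  have hper : w ∈ periodicPts f := by
    obtain ⟨k, hk⟩ := htrans (f w) w (hlen w)
    exact ⟨k + 1, k.succ_pos, by rwa [IsPeriodicPt, IsFixedPt, iterate_succ_apply]⟩
  let orbit : Fin (minimalPeriod f w) → List.Vector X w.length :=
    fun m => ⟨f^[m] w, length_iterate_of_length_apply hlen m w⟩
  have horbit : Bijective orbit := by
    refine ⟨fun i j hij => Fin.ext (iterate_injOn_Iio_minimalPeriod i.isLt j.isLt
      (congrArg Subtype.val hij)), fun v => ?_⟩
    obtain ⟨k, hk⟩ := htrans w v.1 v.2.symm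
    exact ⟨⟨k % minimalPeriod f w, Nat.mod_lt _ (minimalPeriod_pos_of_mem_periodicPts hper)⟩,
      Subtype.ext (iterate_mod_minimalPeriod_eq.trans hk)⟩
  simpa using Fintype.card_of_bijective horbit

lemma wordToNat_append {d : ℕ} (u v : List (Fin d)) :
    wordToNat (u ++ v) = wordToNat u + d ^ u.length * wordToNat v := by
  induction u with
  | nil => simp [wordToNat]
  | cons a u ih =>
    simp only [List.cons_append, wordToNat, List.foldr_cons] at ih ⊢
    rw [ih, List.length_cons, pow_succ]
    ring

lemma wordToNat_lt {d : ℕ} (w : List (Fin d)) : wordToNat w < d ^ w.length := by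
  induction w with
  | nil => simp [wordToNat]
  | cons a w ih =>
    have := a.isLt
    calc wordToNat (a :: w) = a + d * wordToNat w := rfl
      _ < d * (wordToNat w + 1) := by rw [Nat.mul_add, Nat.mul_one]; omega
      _ ≤ d * d ^ w.length := Nat.mul_le_mul_left d ih
      _ = d ^ (a :: w).length := (pow_succ' d _).symm

lemma wordToNat_append_mod {d : ℕ} (u v : List (Fin d)) :
    wordToNat (u ++ v) % d ^ u.length = wordToNat u := by
  rw [wordToNat_append, Nat.add_mul_mod_self_left, Nat.mod_eq_of_lt (wordToNat_lt u)]

lemma eq_of_wordToNat_eq {d : ℕ} {u v : List (Fin d)}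
    (hlen : u.length = v.length) (h : wordToNat u = wordToNat v) : u = v := by
  induction u generalizing v with
  | nil => exact (List.length_eq_zero_iff.mp hlen.symm).symm
  | cons a u ih =>
    obtain _ | ⟨b, v⟩ := v
    · simp at hlen
    change a + d * wordToNat u = b + d * wordToNat v at h
    have hab : a = b := Fin.ext <| by
      simpa [Nat.mod_eq_of_lt a.isLt, Nat.mod_eq_of_lt b.isLt] using congrArg (· % d) h
    subst hab
    have hd : 0 < d := a.pos
    rw [ih (by simpa using hlen) (Nat.eq_of_mul_eq_mul_left hd (by omega))]

theorem stmt15_general (d : ℕ)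
    (A B L : List (Fin d) → List (Fin d))
    (hA : IsEndo A)
    (htrans : ∀ u v : List (Fin d), u.length = v.length → ∃ k, A^[k] u = v)
    (hB : IsEndo B)
    (hLlen : ∀ w, (L w).length = w.length)
    (hLspec : ∀ w, A^[wordToNat (L w)] w = B w) :
    IsEndo L := by
  refine ⟨hLlen, fun w a => ?_⟩
  obtain hnil | ⟨u, b, hub⟩ := (L (w ++ [a])).eq_nil_or_concat'
  · simpa [hnil] using hLlen (w ++ [a])
  have hu : u.length = w.length := by simpa [hub] using hLlen (w ++ [a])
  have hperiod : minimalPeriod A w = d ^ w.length := by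
    simpa using minimalPeriod_eq_card_pow_length hA.1 htrans w
  obtain ⟨c, hc⟩ := hB.2 w a
  have hrestrict : A^[wordToNat (u ++ [b])] w = A^[wordToNat (L w)] w :=
    ((hA.iterate _).eq_of_apply_append_eq (hub ▸ (hLspec _).trans hc)).trans (hLspec w).symm
  have hcode : wordToNat u = wordToNat (L w) := by
    rw [← iterate_mod_minimalPeriod_eq, hperiod, ← hu, wordToNat_append_mod] at hrestrict
    refine (iterate_eq_iterate_iff_of_lt_minimalPeriod ?_ ?_).1 hrestrict <;> rw [hperiod]
    · exact hu ▸ wordToNat_lt u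
    · exact hLlen w ▸ wordToNat_lt (L w)
  exact ⟨b, by rw [hub, eq_of_wordToNat_eq (hu.trans (hLlen w).symm) hcode]⟩

/-- Let `A` be a level-transitive automorphism of the `d`-regular tree and `B` an
endomorphism. Any map `L` which, for each word `w` of length `n`, outputs the word of
length `n` encoding the displacement `k` with `A^k(w) = B(w)` (i.e. `L = Log_A(B)`)
is an endomorphism of the tree. -/
theorem stmt15 (d : ℕ) (hd : 0 < d)
    (A B L : List (Fin d) → List (Fin d))
    (hA : IsEndo A) (hAbij : Function.Bijective A)
    (htrans : ∀ u v : List (Fin d), u.length = v.length → ∃ k, A^[k] u = v)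
    (hB : IsEndo B)
    (hLlen : ∀ w, (L w).length = w.length)
    (hLspec : ∀ w, A^[wordToNat (L w)] w = B w) :
    IsEndo L :=
  stmt15_general d A B L hA htrans hB hLlen hLspec
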